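/- arXiv:2006.13074 — 5 statements merged into one kernel-verified Lean document; each statement's English description precedes it below -/
import Mathlib

section
/- Let ∗ be the Hodge star operator on alternating 2-forms on ℝ⁴, i.e. the unique linear map on 2-forms satisfying β ∧ ∗α = ⟨β,α⟩ e¹²³⁴ for all 2-forms α, β, where the inner product on 2-forms makes {e^{ij} : 1 ≤ i < j ≤ 4} an orthonormal basis. Then for every M ∈ gl₄(ℝ) and every alternating 2-form α on ℝ⁴, ∗(θ(M)α) = −θ(Mᵗ)(∗α) − (tr M)·(∗α). -/
open scoped BigOperators

noncomputable section

/-- `Vn n` is `ℝⁿ`. -/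
abbrev Vn (n : ℕ) := Fin n → ℝ

/-- The space of alternating `k`-forms on `ℝⁿ`. -/
abbrev AltForm (n k : ℕ) := AlternatingMap ℝ (Vn n) ℝ (Fin k)

/-- The wedge product of alternating forms (determinant/shuffle convention, so that
`e¹ ∧ ⋯ ∧ eᵏ` evaluated at `(e₁, …, e_k)` gives `1`). -/
def wedge {n p q : ℕ} (α : AltForm n p) (β : AltForm n q) : AltForm n (p + q) :=
  ((LinearMap.mul' ℝ ℝ).compAlternatingMap (α.domCoprod β)).domDomCongr finSumFinEquiv

/-- A linear functional, viewed as a `1`-form. -/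
def oneForm {n : ℕ} (f : Vn n →ₗ[ℝ] ℝ) : AltForm n 1 :=
  AlternatingMap.ofSubsingleton ℝ (Vn n) ℝ (0 : Fin 1) f

/-- The basis `1`-form `e^{i+1}` on `ℝⁿ` (`0`-indexed: `ef i` is dual to the
standard basis vector `e_i`). -/
def ef {n : ℕ} (i : Fin n) : AltForm n 1 := oneForm (LinearMap.proj i)

/-- The inner product on alternating `k`-forms on `ℝⁿ` for which the basis
`{e^{i₁} ∧ ⋯ ∧ e^{i_k} : i₁ < ⋯ < i_k}` is orthonormal. -/
def formInner {n k : ℕ} (α β : AltForm n k) : ℝ :=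
  (1 / (Nat.factorial k : ℝ)) *
    ∑ v : Fin k → Fin n,
      α (fun m => Pi.single (v m) (1 : ℝ)) * β (fun m => Pi.single (v m) (1 : ℝ))

/-- `θ(f)` acting on alternating `2`-forms: `(θ(f)α)(u,v) = -α(f u, v) - α(u, f v)`. -/
def theta2 {n : ℕ} (f : Vn n →ₗ[ℝ] Vn n) (α : AltForm n 2) : AltForm n 2 where
  toMultilinearMap :=
    -(α.toMultilinearMap.compLinearMap ![f, LinearMap.id]
      + α.toMultilinearMap.compLinearMap ![LinearMap.id, f])
  map_eq_zero_of_eq' := by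
    intro v i j hv hij
    have key : ∀ u : Vn n, α ![f u, u] + α ![u, f u] = 0 := by
      intro u
      have hs : (![u, f u] ∘ ⇑(Equiv.swap (0 : Fin 2) 1)) = ![f u, u] := by
        funext k
        fin_cases k <;> simp [Equiv.swap_apply_left, Equiv.swap_apply_right]
      have := AlternatingMap.map_swap α ![u, f u] (i := 0) (j := 1) (by decide)
      rw [hs] at this
      linarith
    have h1 : (fun k : Fin 2 => (![f, LinearMap.id] k) (v k)) = ![f (v 0), v 1] := by
      funext k; fin_cases k <;> simp
    have h2 : (fun k : Fin 2 => (![LinearMap.id, f] k) (v k)) = ![v 0, f (v 1)] := by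
      funext k; fin_cases k <;> simp
    have hv01 : v 0 = v 1 := by
      fin_cases i <;> fin_cases j <;> first | exact hv | exact hv.symm | exact absurd rfl hij
    show -(α.toMultilinearMap.compLinearMap ![f, LinearMap.id]
      + α.toMultilinearMap.compLinearMap ![LinearMap.id, f]) v = 0
    simp only [MultilinearMap.neg_apply, MultilinearMap.add_apply,
      MultilinearMap.compLinearMap_apply]
    rw [h1, h2, hv01]
    have hk := key (v 1)
    simp only [AlternatingMap.coe_multilinearMap] at *
    linarith

@[simp] lemma theta2_apply {n : ℕ} (f : Vn n →ₗ[ℝ] Vn n) (α : AltForm n 2)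
    (v : Fin 2 → Vn n) :
    theta2 f α v = -α ![f (v 0), v 1] - α ![v 0, f (v 1)] := by
  have h1 : (fun k : Fin 2 => (![f, LinearMap.id] k) (v k)) = ![f (v 0), v 1] := by
    funext k; fin_cases k <;> simp
  have h2 : (fun k : Fin 2 => (![LinearMap.id, f] k) (v k)) = ![v 0, f (v 1)] := by
    funext k; fin_cases k <;> simp
  show -(α.toMultilinearMap.compLinearMap ![f, LinearMap.id]
      + α.toMultilinearMap.compLinearMap ![LinearMap.id, f]) v = _
  simp only [MultilinearMap.neg_apply, MultilinearMap.add_apply,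
    MultilinearMap.compLinearMap_apply]
  rw [h1, h2]
  ring_nf
  simp [AlternatingMap.toMultilinearMap]

/-- `θ(f)` acting on `1`-forms: `θ(f)α = -α ∘ f`. -/
def theta1 {n : ℕ} (f : Vn n →ₗ[ℝ] Vn n) (α : AltForm n 1) : AltForm n 1 :=
  -(α.compLinearMap f)

/-- A `4 × 4` matrix, embedded as a `7 × 7` matrix acting on
`g₁ = span{e₃,e₄,e₅,e₆} = span of coordinates 2,3,4,5` and by zero on the rest. -/
def mat47 (M : Matrix (Fin 4) (Fin 4) ℝ) : Matrix (Fin 7) (Fin 7) ℝ :=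
  Matrix.of fun i j =>
    if h : 2 ≤ (i : ℕ) ∧ (i : ℕ) ≤ 5 ∧ 2 ≤ (j : ℕ) ∧ (j : ℕ) ≤ 5 then
      M ⟨(i : ℕ) - 2, by omega⟩ ⟨(j : ℕ) - 2, by omega⟩
    else 0

/-- The linear endomorphism of `ℝ⁷` determined by `M ∈ gl₄(ℝ)` acting on `g₁` (with
`M e_j = Σᵢ m_{ij} e_i`) and by zero on `span{e₁,e₂,e₇}`. -/
def ext47 (M : Matrix (Fin 4) (Fin 4) ℝ) : Vn 7 →ₗ[ℝ] Vn 7 :=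
  (mat47 M).mulVecLin

/-- wedge of two basis 1-forms (0-indexed). -/
def w2 (i j : Fin 7) : AltForm 7 2 := wedge (ef i) (ef j)

def w3 (i j k : Fin 7) : AltForm 7 3 := wedge (w2 i j) (ef k)

def w4 (i j k l : Fin 7) : AltForm 7 4 := wedge (w3 i j k) (ef l)

def w5 (i j k l m : Fin 7) : AltForm 7 5 := wedge (w4 i j k l) (ef m)

/-- The volume form `e¹²³⁴⁵⁶⁷` on `ℝ⁷`. -/
def vol7 : AltForm 7 7 := wedge (wedge (w5 0 1 2 3 4) (ef 5)) (ef 6)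

/-- The volume form `e¹²³⁴` on `ℝ⁴`. -/
def vol4 : AltForm 4 4 :=
  wedge (wedge (wedge (ef (0 : Fin 4)) (ef 1)) (ef 2)) (ef 3)

/-- `ω₇ = e³⁴ + e⁵⁶` (0-indexed coordinates 2,3,4,5). -/
def om7 : AltForm 7 2 := w2 2 3 + w2 4 5
/-- `ω₁ = e³⁵ - e⁴⁶`. -/
def om1 : AltForm 7 2 := w2 2 4 - w2 3 5
/-- `ω₂ = -e³⁶ - e⁴⁵`. -/
def om2 : AltForm 7 2 := -w2 2 5 - w2 3 4

/-- The `G₂`-structure `φ = e¹²⁷ + e³⁴⁷ + e⁵⁶⁷ + e¹³⁵ - e¹⁴⁶ - e²³⁶ - e²⁴⁵`. -/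
def phiG2 : AltForm 7 3 :=
  w3 0 1 6 + w3 2 3 6 + w3 4 5 6 + w3 0 2 4 - w3 0 3 5 - w3 1 2 5 - w3 1 3 4

/-- `ψ = ∗φ = e³⁴⁵⁶ + ω₇ ∧ e¹² + ω₁ ∧ e²⁷ - ω₂ ∧ e¹⁷`. -/
def psiG2 : AltForm 7 4 :=
  w4 2 3 4 5 + wedge om7 (w2 0 1) + wedge om1 (w2 1 6) - wedge om2 (w2 0 6)

/-- The value of the Chevalley–Eilenberg differential of a `(k+1)`-form `α` on the Lie
algebra `(ℝ⁷, br)` at a tuple of `k+2` vectors: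
`dα(v₀,…,v_{k+1}) = Σ_{i<j} (-1)^{i+j} α([v_i,v_j], v₀, …, v̂ᵢ, …, v̂ⱼ, …)`. -/
def dAt {k : ℕ} (br : Vn 7 → Vn 7 → Vn 7) (α : AltForm 7 (k + 1))
    (v : Fin (k + 2) → Vn 7) : ℝ :=
  ∑ j : Fin (k + 2), ∑ i : Fin (k + 2),
    if h : (i : ℕ) < (j : ℕ) then
      (-1 : ℝ) ^ ((i : ℕ) + (j : ℕ)) *
        α (Fin.cons (br (v i) (v j))
            (Fin.removeNth (⟨(i : ℕ), by omega⟩ : Fin (k + 1)) (Fin.removeNth j v)))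
    else 0

/-- The projection `ℝ⁷ → g₁ ≃ ℝ⁴` onto the coordinates 2,3,4,5. -/
def proj1 (u : Vn 7) : Vn 4 := fun k => u ⟨(k : ℕ) + 2, by omega⟩

/-- The inclusion `ℝ⁴ ≃ g₁ ⊆ ℝ⁷` as the coordinates 2,3,4,5. -/
def emb1 (u : Vn 4) : Vn 7 := fun i =>
  if h : 2 ≤ (i : ℕ) ∧ (i : ℕ) ≤ 5 then u ⟨(i : ℕ) - 2, by omega⟩ else 0

/-- The skew-symmetric bilinear bracket on `ℝ⁷` of the Lie algebra `g_{A₁,A,B,C}`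
(with `e₁,…,e₇` the standard basis, `0`-indexed as `e₁ = e 0, …, e₇ = e 6`):
`[e₇,e₁] = x e₁ + y e₂`, `[e₇,e₂] = z e₁ + w e₂`, `[e₁,e₂] = 0`,
`[e₇,e_j] = A e_j`, `[e₁,e_j] = B e_j`, `[e₂,e_j] = C e_j` for `e_j ∈ g₁`,
and `g₁ = span{e₃,e₄,e₅,e₆}` abelian. -/
def brABC (x y z w : ℝ) (A B C : Matrix (Fin 4) (Fin 4) ℝ) (u v : Vn 7) : Vn 7 :=
  (u 6 * v 0 - u 0 * v 6) •
      (x • (Pi.single (0 : Fin 7) (1 : ℝ) : Vn 7) + y • (Pi.single (1 : Fin 7) (1 : ℝ) : Vn 7))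
  + (u 6 * v 1 - u 1 * v 6) •
      (z • (Pi.single (0 : Fin 7) (1 : ℝ) : Vn 7) + w • (Pi.single (1 : Fin 7) (1 : ℝ) : Vn 7))
  + emb1 (A.mulVec (u 6 • proj1 v - v 6 • proj1 u)
      + B.mulVec (u 0 • proj1 v - v 0 • proj1 u)
      + C.mulVec (u 1 • proj1 v - v 1 • proj1 u))

/-- The diagonal entries of `ad e₇` on the Lie algebra `g_s`. -/
def dS (s : ℝ) : Fin 7 → ℝ :=
  ![3 / 8 + s, -1 / 8 + s, 3 / 8 - s, -1 / 8 - s, 1 / 4, 3 / 4, 0]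

/-- The bracket of the solvable Lie algebra `g_s`: nonzero brackets
`[e₁,e₃] = -e₆`, `[e₁,e₄] = -e₅`, `[e₂,e₃] = -e₅`, `[e₇,eᵢ] = (A_s)ᵢᵢ eᵢ`, with
`A_s = diag(3/8+s, -1/8+s, 3/8-s, -1/8-s, 1/4, 3/4)` (`0`-indexed: `eᵢ = e (i-1)`). -/
def brG (s : ℝ) (u v : Vn 7) : Vn 7 :=
  (u 2 * v 0 - u 0 * v 2) • (Pi.single (5 : Fin 7) (1 : ℝ) : Vn 7)
  + (u 3 * v 0 - u 0 * v 3) • (Pi.single (4 : Fin 7) (1 : ℝ) : Vn 7)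
  + (u 2 * v 1 - u 1 * v 2) • (Pi.single (4 : Fin 7) (1 : ℝ) : Vn 7)
  + (fun i => dS s i * (u 6 * v i - u i * v 6) : Vn 7)

/-- The diagonal entries of `ad e₇` on the Lie algebra `s_a`. -/
def dA (a : ℝ) : Fin 7 → ℝ :=
  ![(1 + 4 * a) / 4, (1 + 4 * a) / 4, (1 - 4 * a) / 4, (1 - 4 * a) / 4, 1 / 2, 1 / 2, 0]

/-- The bracket of the solvable Lie algebra `s_a`: nonzero brackets
`[e₁,e₃] = -e₆`, `[e₁,e₄] = -e₅`, `[e₂,e₃] = -e₅`, `[e₂,e₄] = e₆`,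
`[e₇,eᵢ] = (A_a)ᵢᵢ eᵢ`, with `A_a = (1/4)diag(1+4a, 1+4a, 1-4a, 1-4a, 2, 2)`. -/
def brA (a : ℝ) (u v : Vn 7) : Vn 7 :=
  (u 2 * v 0 - u 0 * v 2) • (Pi.single (5 : Fin 7) (1 : ℝ) : Vn 7)
  + (u 3 * v 0 - u 0 * v 3) • (Pi.single (4 : Fin 7) (1 : ℝ) : Vn 7)
  + (u 2 * v 1 - u 1 * v 2) • (Pi.single (4 : Fin 7) (1 : ℝ) : Vn 7)
  + (u 1 * v 3 - u 3 * v 1) • (Pi.single (5 : Fin 7) (1 : ℝ) : Vn 7)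
  + (fun i => dA a i * (u 6 * v i - u i * v 6) : Vn 7)

/-- The diagonal linear operator on `ℝ⁷` with diagonal entries `d`. -/
def dOp (d : Fin 7 → ℝ) : Vn 7 →ₗ[ℝ] Vn 7 where
  toFun u := fun i => d i * u i
  map_add' u v := by funext i; simp [mul_add]
  map_smul' c u := by funext i; simp [Pi.smul_apply, smul_eq_mul]; ring

/-- The torsion `2`-form `τ_s = (5-8s)/4 e¹² + (5+8s)/4 e³⁴ - (5/2) e⁵⁶`
of the closed `G₂`-structure `φ` on `g_s`. -/
def tauS (s : ℝ) : AltForm 7 2 :=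
  ((5 - 8 * s) / 4) • w2 0 1 + ((5 + 8 * s) / 4) • w2 2 3 + (-(5 / 2)) • w2 4 5

/-- The functional `F = scal²/|Ric|²` on the family `(G_s, φ)`. -/
def Fq (s : ℝ) : ℝ := (75 + 64 * s ^ 2) ^ 2 / (1725 + 4224 * s ^ 2 + 4096 * s ^ 4)

/-!
Evaluating `β ∧ ∗γ = ⟨β, γ⟩ e¹²³⁴` at `(e₁, e₂, e₃, e₄)` with `β = eᵃ ∧ eᵇ` pins `∗` down to the
familiar table `(∗γ)(e_c, e_d) = ±γ(e_a, e_b)` for `{a, b, c, d} = {1, 2, 3, 4}`. A 2-form is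
determined by its six components, and the components of `θ(M)γ` are linear in those of `γ` with
coefficients taken from `M`; reading both sides through the table, the identity becomes a
polynomial identity in the entries of `M` and the components of `α`.
-/

open Equiv
open scoped TensorProduct

abbrev stdVec {n : ℕ} (i : Fin n) : Vn n := Pi.single i 1

@[simp] lemma ef_apply {n : ℕ} (i : Fin n) (v : Fin 1 → Vn n) : ef i v = v 0 i := rfl

lemma wedge_apply {n p q : ℕ} (α : AltForm n p) (β : AltForm n q) (v : Fin (p + q) → Vn n) :
    ((p.factorial * q.factorial : ℕ) : ℝ) * wedge α β v
      = ∑ σ : Perm (Fin (p + q)), (Perm.sign σ : ℝ) *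
          (α (fun i => v (σ (Fin.castAdd q i))) * β (fun j => v (σ (Fin.natAdd p j)))) := by
  -- `domCoprod` sums over shuffles only; its alternatization is `p! q!` times it.
  have h := congrArg (fun F : Vn n [⋀^(Fin p ⊕ Fin q)]→ₗ[ℝ] (ℝ ⊗[ℝ] ℝ) =>
    LinearMap.mul' ℝ ℝ (F (v ∘ finSumFinEquiv))) (MultilinearMap.domCoprod_alternization_eq α β)
  simp only [MultilinearMap.alternatization_apply, AlternatingMap.smul_apply,
    MultilinearMap.domDomCongr_apply, MultilinearMap.domCoprod_apply, map_sum,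
    AlternatingMap.coe_multilinearMap, map_nsmul, LinearMap.map_smul_of_tower,
    LinearMap.mul'_apply, Fintype.card_fin] at h
  change _ * LinearMap.mul' ℝ ℝ (α.domCoprod β (v ∘ finSumFinEquiv)) = _
  simp only [nsmul_eq_mul] at h
  push_cast at h ⊢
  rw [← h, ← Fintype.sum_equiv (permCongr finSumFinEquiv) (fun σ => (Perm.sign σ : ℝ) *
      (α (fun i => v (finSumFinEquiv (σ (Sum.inl i)))) *
        β (fun j => v (finSumFinEquiv (σ (Sum.inr j))))))]
  · exact Finset.sum_congr rfl fun σ _ => by rw [Units.smul_def, zsmul_eq_mul]; rfl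
  · intro σ
    simp [permCongr_apply, Perm.sign_permCongr]

lemma univ_perm_fin_three : (Finset.univ : Finset (Perm (Fin 3))) =
    {1, swap 0 1, swap 0 2, swap 1 2, swap 0 1 * swap 1 2, swap 0 2 * swap 1 2} := by
  decide

lemma univ_perm_fin_four : (Finset.univ : Finset (Perm (Fin 4))) =
    {1, swap 2 3, swap 1 2, swap 1 2 * swap 2 3, swap 1 3 * swap 3 2, swap 1 3, swap 0 1,
     swap 0 1 * swap 2 3, swap 0 1 * swap 1 2, swap 0 1 * swap 1 2 * swap 2 3,
     swap 0 1 * swap 1 3 * swap 3 2, swap 0 1 * swap 1 3, swap 0 2 * swap 2 1,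
     swap 0 2 * swap 2 3 * swap 3 1, swap 0 2, swap 0 2 * swap 2 3, swap 0 2 * swap 1 3,
     swap 0 2 * swap 2 1 * swap 1 3, swap 0 3 * swap 3 2 * swap 2 1, swap 0 3 * swap 3 1,
     swap 0 3 * swap 3 2, swap 0 3, swap 0 3 * swap 3 1 * swap 1 2, swap 0 3 * swap 1 2} := by
  decide

section TwoForms

variable {n : ℕ}

lemma altForm_two_swap (γ : AltForm n 2) (u w : Vn n) : γ ![w, u] = -γ ![u, w] := by
  have hswap : ![u, w] ∘ swap (0 : Fin 2) 1 = ![w, u] := by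
    funext k; fin_cases k <;> rfl
  rw [← hswap]
  exact γ.map_swap _ (by decide)

lemma altForm_two_self (γ : AltForm n 2) (u : Vn n) : γ ![u, u] = 0 :=
  γ.map_eq_zero_of_eq _ (i := 0) (j := 1) rfl (by decide)

lemma altForm_two_ext {γ δ : AltForm n 2}
    (h : ∀ i j : Fin n, i < j → γ ![stdVec i, stdVec j] = δ ![stdVec i, stdVec j]) : γ = δ := by
  refine (Pi.basisFun ℝ (Fin n)).ext_alternating fun v _ => ?_
  have hv : (fun k => Pi.basisFun ℝ (Fin n) (v k)) = ![stdVec (v 0), stdVec (v 1)] := by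
    funext k; fin_cases k <;> simp
  rw [hv]
  rcases lt_trichotomy (v 0) (v 1) with hlt | heq | hgt
  · exact h _ _ hlt
  · rw [heq, altForm_two_self, altForm_two_self]
  · rw [altForm_two_swap γ, altForm_two_swap δ, h _ _ hgt]

lemma altForm_two_apply_eq_sum_left (γ : AltForm n 2) (u w : Vn n) :
    γ ![u, w] = ∑ m, u m * γ ![stdVec m, w] := by
  conv_lhs => rw [pi_eq_sum_univ' u]
  change γ.toMultilinearMap.curryLeft _ ![w] = _
  simp only [map_sum, map_smul, sum_apply, smul_apply, smul_eq_mul]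
  rfl

lemma altForm_two_apply_eq_sum_right (γ : AltForm n 2) (u w : Vn n) :
    γ ![u, w] = ∑ m, w m * γ ![u, stdVec m] := by
  simp only [altForm_two_swap γ _ u, altForm_two_apply_eq_sum_left γ w u, Finset.sum_neg_distrib,
    mul_neg]

lemma theta2_mulVecLin_apply_stdVec (M : Matrix (Fin n) (Fin n) ℝ) (γ : AltForm n 2)
    (i j : Fin n) :
    theta2 M.mulVecLin γ ![stdVec i, stdVec j]
      = -∑ m, M m i * γ ![stdVec m, stdVec j] - ∑ m, M m j * γ ![stdVec i, stdVec m] := by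
  rw [theta2_apply, altForm_two_apply_eq_sum_left, altForm_two_apply_eq_sum_right]
  simp

lemma wedge_ef_ef_apply (a b : Fin n) (v : Fin 2 → Vn n) :
    wedge (ef a) (ef b) v = v 0 a * v 1 b - v 0 b * v 1 a := by
  have h := wedge_apply (ef a) (ef b) v
  rw [show (Finset.univ : Finset (Perm (Fin (1 + 1)))) = {1, swap 0 1} by decide,
    Finset.sum_pair (by decide)] at h
  simp at h
  linarith

lemma formInner_wedge_ef_ef (a b : Fin n) (γ : AltForm n 2) :
    formInner (wedge (ef a) (ef b)) γ = γ ![stdVec a, stdVec b] := by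
  have hsum : ∀ F : (Fin 2 → Fin n) → ℝ, ∑ v, F v = ∑ i, ∑ j, F ![i, j] := fun F => by
    rw [← Fintype.sum_prod_type']
    exact Fintype.sum_equiv (piFinTwoEquiv fun _ => Fin n) _ _
      fun v => congrArg F (funext fun k => by fin_cases k <;> rfl)
  have hvec (i j : Fin n) : (fun m => Pi.single (![i, j] m) (1 : ℝ)) = ![stdVec i, stdVec j] := by
    funext k; fin_cases k <;> rfl
  rw [formInner, hsum]
  simp [hvec, wedge_ef_ef_apply, Pi.single_apply, sub_mul, Finset.sum_sub_distrib,
    altForm_two_swap γ (stdVec a), ← two_mul]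

lemma wedge_two_one_apply (β : AltForm n 2) (c : Fin n) (v : Fin 3 → Vn n) :
    wedge β (ef c) v = β ![v 0, v 1] * v 2 c - β ![v 0, v 2] * v 1 c + β ![v 1, v 2] * v 0 c := by
  have h := wedge_apply β (ef c) v
  have hβ (σ : Perm (Fin 3)) :
      (fun i : Fin 2 => v (σ (Fin.castAdd 1 i))) = ![v (σ 0), v (σ 1)] := by
    funext i; fin_cases i <;> rfl
  have hswap (δ : AltForm n 2) (i j : Fin 3) (_ : i < j) : δ ![v j, v i] = -δ ![v i, v j] :=
    altForm_two_swap δ (v i) (v j)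
  simp only [hβ] at h
  rw [show (Finset.univ : Finset (Perm (Fin (2 + 1)))) = _ from univ_perm_fin_three] at h
  simp (disch := decide) only [Finset.sum_insert, Finset.sum_singleton] at h
  simp (disch := decide) [Perm.mul_apply, swap_apply_def, hswap] at h
  linarith

lemma wedge_two_two_apply (β γ : AltForm n 2) (v : Fin 4 → Vn n) :
    wedge β γ v = β ![v 0, v 1] * γ ![v 2, v 3] - β ![v 0, v 2] * γ ![v 1, v 3]
      + β ![v 0, v 3] * γ ![v 1, v 2] + β ![v 1, v 2] * γ ![v 0, v 3]
      - β ![v 1, v 3] * γ ![v 0, v 2] + β ![v 2, v 3] * γ ![v 0, v 1] := by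
  have h := wedge_apply β γ v
  have hβ (σ : Perm (Fin 4)) :
      (fun i : Fin 2 => v (σ (Fin.castAdd 2 i))) = ![v (σ 0), v (σ 1)] := by
    funext i; fin_cases i <;> rfl
  have hγ (σ : Perm (Fin 4)) :
      (fun j : Fin 2 => v (σ (Fin.natAdd 2 j))) = ![v (σ 2), v (σ 3)] := by
    funext i; fin_cases i <;> rfl
  have hswap (δ : AltForm n 2) (i j : Fin 4) (_ : i < j) : δ ![v j, v i] = -δ ![v i, v j] :=
    altForm_two_swap δ (v i) (v j)
  simp only [hβ, hγ] at h
  rw [show (Finset.univ : Finset (Perm (Fin (2 + 2)))) = _ from univ_perm_fin_four] at h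
  simp (disch := decide) only [Finset.sum_insert, Finset.sum_singleton] at h
  simp (disch := decide) [Perm.mul_apply, swap_apply_def, hswap] at h
  linarith

end TwoForms

lemma vol4_apply_stdVec : vol4 ![stdVec 0, stdVec 1, stdVec 2, stdVec 3] = 1 := by
  have hE : ![stdVec 0, stdVec 1, stdVec 2, stdVec 3] = (stdVec : Fin 4 → Vn 4) := by
    funext k; fin_cases k <;> rfl
  rw [hE]
  have h := wedge_apply (wedge (wedge (ef (0 : Fin 4)) (ef 1)) (ef 2)) (ef 3) stdVec
  have hβ (σ : Perm (Fin 4)) : (fun i : Fin 3 => stdVec (σ (Fin.castAdd 1 i)))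
      = ![stdVec (σ 0), stdVec (σ 1), stdVec (σ 2)] := by
    funext i; fin_cases i <;> rfl
  simp only [hβ] at h
  rw [show (Finset.univ : Finset (Perm (Fin (3 + 1)))) = _ from univ_perm_fin_four] at h
  simp (disch := decide) only [Finset.sum_insert, Finset.sum_singleton] at h
  simp [Perm.mul_apply, swap_apply_def, wedge_two_one_apply, wedge_ef_ef_apply, Nat.factorial] at h
  rw [vol4]
  linarith

lemma hodge_star_apply_stdVec (star : AltForm 4 2 →ₗ[ℝ] AltForm 4 2)
    (hstar : ∀ α β : AltForm 4 2, wedge β (star α) = formInner β α • vol4) (γ : AltForm 4 2) :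
    star γ ![stdVec 2, stdVec 3] = γ ![stdVec 0, stdVec 1] ∧
    star γ ![stdVec 1, stdVec 3] = -γ ![stdVec 0, stdVec 2] ∧
    star γ ![stdVec 1, stdVec 2] = γ ![stdVec 0, stdVec 3] ∧
    star γ ![stdVec 0, stdVec 3] = γ ![stdVec 1, stdVec 2] ∧
    star γ ![stdVec 0, stdVec 2] = -γ ![stdVec 1, stdVec 3] ∧
    star γ ![stdVec 0, stdVec 1] = γ ![stdVec 2, stdVec 3] := by
  have key (a b : Fin 4) :
      wedge (wedge (ef a) (ef b)) (star γ) ![stdVec 0, stdVec 1, stdVec 2, stdVec 3]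
        = γ ![stdVec a, stdVec b] := by
    rw [hstar, AlternatingMap.smul_apply, formInner_wedge_ef_ef, vol4_apply_stdVec, smul_eq_mul,
      mul_one]
  have k01 := key 0 1
  have k02 := key 0 2
  have k03 := key 0 3
  have k12 := key 1 2
  have k13 := key 1 3
  have k23 := key 2 3
  simp [wedge_two_two_apply, wedge_ef_ef_apply] at k01 k02 k03 k12 k13 k23
  exact ⟨by linarith, by linarith, by linarith, by linarith, by linarith, by linarith⟩

/-- If `∗` is the Hodge star operator on alternating `2`-forms on `ℝ⁴`,
i.e. the (unique) linear map satisfying `β ∧ ∗α = ⟨β,α⟩ e¹²³⁴` for all `2`-forms `α, β`,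
then `∗(θ(M)α) = -θ(Mᵗ)(∗α) - (tr M)·(∗α)` for every `M ∈ gl₄(ℝ)` and `2`-form `α`. -/
theorem star_theta2 (star : AltForm 4 2 →ₗ[ℝ] AltForm 4 2)
    (hstar : ∀ α β : AltForm 4 2, wedge β (star α) = formInner β α • vol4)
    (M : Matrix (Fin 4) (Fin 4) ℝ) (α : AltForm 4 2) :
    star (theta2 M.mulVecLin α)
      = -theta2 (Matrix.mulVecLin M.transpose) (star α) - M.trace • star α := by
  obtain ⟨t23, t13, t12, t03, t02, t01⟩ := hodge_star_apply_stdVec star hstar (theta2 M.mulVecLin α)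
  obtain ⟨s23, s13, s12, s03, s02, s01⟩ := hodge_star_apply_stdVec star hstar α
  have hswap (γ : AltForm 4 2) (i j : Fin 4) (_ : i < j) :
      γ ![stdVec j, stdVec i] = -γ ![stdVec i, stdVec j] :=
    altForm_two_swap γ (stdVec i) (stdVec j)
  refine altForm_two_ext fun i j hij => ?_
  fin_cases i <;> fin_cases j <;> (try exact absurd hij (by decide)) <;>
    simp only [AlternatingMap.sub_apply, AlternatingMap.neg_apply, AlternatingMap.smul_apply,
      smul_eq_mul, Fin.reduceFinMk, t23, t13, t12, t03, t02, t01,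
      theta2_mulVecLin_apply_stdVec] <;>
    simp (disch := decide) only [Fin.sum_univ_four, hswap, altForm_two_self, s23, s13, s12, s03,
      s02, s01, Matrix.transpose_apply, Matrix.trace, Matrix.diag] <;>
    ring
end
end

section
/- Fix real numbers x, y, z, w and matrices A, B, C ∈ gl₄(ℝ). The skew-symmetric bilinear bracket on ℝ⁷ defined by [e₇,e₁] = x e₁ + y e₂, [e₇,e₂] = z e₁ + w e₂, [e₁,e₂] = 0, [e₇,e_j] = Σ_{i=3}^{6} a_{ij} e_i, [e₁,e_j] = Σ_{i=3}^{6} b_{ij} e_i, [e₂,e_j] = Σ_{i=3}^{6} c_{ij} e_i for j ∈ {3,4,5,6}, and [e_i,e_j] = 0 for i,j ∈ {3,4,5,6}, satisfies the Jacobi identity if and only if [A,B] = xB + yC, [A,C] = zB + wC and [B,C] = 0 (matrix commutators). -/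
open scoped BigOperators

noncomputable section

/-!
Modulo `g₁ = span{e₃,…,e₆}` the bracket is that of the Lie algebra `ℝ ⋉ ℝ²` spanned by
`e₁, e₂, e₇`, so the Jacobiator lies in `g₁`. There it is a sum of three terms, one for each
pair among `e₇, e₁, e₂`: the defect `[A,B] - xB - yC`, `[A,C] - zB - wC` or `[B,C]` applied
to a vector built from the `2 × 2` minors of the `(e₇,e₁,e₂)`-coordinates. Evaluating the
Jacobiator at `(e₇, v, e₁)`, `(e₇, v, e₂)` and `(e₁, v, e₂)` with `v ∈ g₁` isolates each
defect applied to `v`.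
-/

open Matrix

def jacobiator {V : Type*} [Add V] (br : V → V → V) (u v t : V) : V :=
  br (br u v) t + br (br v t) u + br (br t u) v

def minor (i j : Fin 7) (u v : Vn 7) : ℝ := u i * v j - u j * v i

def cyclicMinorVec (i j : Fin 7) (u v t : Vn 7) : Vn 4 :=
  minor i j u t • proj1 v + minor i j v u • proj1 t + minor i j t v • proj1 u

@[simp] lemma proj1_emb1 (a : Vn 4) : proj1 (emb1 a) = a := by
  funext k; fin_cases k <;> rfl

@[simp] lemma emb1_zero : emb1 0 = 0 := by
  funext i; simp [emb1]

lemma emb1_proj1 (f : Vn 7) (h0 : f 0 = 0) (h1 : f 1 = 0) (h6 : f 6 = 0) :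
    emb1 (proj1 f) = f := by
  funext i; fin_cases i <;> simp [emb1, proj1, *]

lemma proj1_add (f g : Vn 7) : proj1 (f + g) = proj1 f + proj1 g := rfl

@[simp] lemma proj1_single_zero : proj1 (Pi.single 0 1) = 0 := by
  funext k; fin_cases k <;> simp [proj1]

@[simp] lemma proj1_single_one : proj1 (Pi.single 1 1) = 0 := by
  funext k; fin_cases k <;> simp [proj1]

@[simp] lemma proj1_single_six : proj1 (Pi.single 6 1) = 0 := by
  funext k; fin_cases k <;> simp [proj1]

section brABC

variable (x y z w : ℝ) (A B C : Matrix (Fin 4) (Fin 4) ℝ) (u v t : Vn 7)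

lemma brABC_apply_zero :
    brABC x y z w A B C u v 0 = x * minor 6 0 u v + z * minor 6 1 u v := by
  simp [brABC, emb1, minor]; ring

lemma brABC_apply_one :
    brABC x y z w A B C u v 1 = y * minor 6 0 u v + w * minor 6 1 u v := by
  simp [brABC, emb1, minor]; ring

lemma brABC_apply_six : brABC x y z w A B C u v 6 = 0 := by
  simp [brABC, emb1]

lemma proj1_brABC : proj1 (brABC x y z w A B C u v) =
    A *ᵥ (u 6 • proj1 v - v 6 • proj1 u) + B *ᵥ (u 0 • proj1 v - v 0 • proj1 u)
      + C *ᵥ (u 1 • proj1 v - v 1 • proj1 u) := by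
  funext k; fin_cases k <;> simp [brABC, proj1, emb1]

set_option maxHeartbeats 1000000 in
lemma proj1_jacobiator_brABC : proj1 (jacobiator (brABC x y z w A B C) u v t) =
    (A * B - B * A - x • B - y • C) *ᵥ cyclicMinorVec 6 0 u v t
      + (A * C - C * A - z • B - w • C) *ᵥ cyclicMinorVec 6 1 u v t
      + (B * C - C * B) *ᵥ cyclicMinorVec 0 1 u v t := by
  simp only [jacobiator, cyclicMinorVec, minor, proj1_add, proj1_brABC, brABC_apply_zero,
    brABC_apply_one, brABC_apply_six]
  funext k
  simp only [mulVec, dotProduct, Fin.sum_univ_four, mul_apply, Matrix.sub_apply,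
    Matrix.smul_apply, Pi.add_apply, Pi.sub_apply, Pi.smul_apply, smul_eq_mul]
  ring

lemma jacobiator_brABC : jacobiator (brABC x y z w A B C) u v t =
    emb1 ((A * B - B * A - x • B - y • C) *ᵥ cyclicMinorVec 6 0 u v t
      + (A * C - C * A - z • B - w • C) *ᵥ cyclicMinorVec 6 1 u v t
      + (B * C - C * B) *ᵥ cyclicMinorVec 0 1 u v t) := by
  rw [← proj1_jacobiator_brABC, emb1_proj1] <;>
    simp only [jacobiator, Pi.add_apply, brABC_apply_zero, brABC_apply_one,
      brABC_apply_six, minor] <;> ring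

end brABC

lemma eq_zero_of_sum_mulVec_cyclicMinorVec_eq_zero {P Q R : Matrix (Fin 4) (Fin 4) ℝ}
    (h : ∀ u v t : Vn 7, P *ᵥ cyclicMinorVec 6 0 u v t + Q *ᵥ cyclicMinorVec 6 1 u v t
      + R *ᵥ cyclicMinorVec 0 1 u v t = 0) :
    P = 0 ∧ Q = 0 ∧ R = 0 := by
  refine ⟨ext_iff_mulVec.mpr fun a => ?_, ext_iff_mulVec.mpr fun a => ?_,
    ext_iff_mulVec.mpr fun a => ?_⟩
  · simpa [cyclicMinorVec, minor, emb1] using h (Pi.single 6 1) (emb1 a) (Pi.single 0 1)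
  · simpa [cyclicMinorVec, minor, emb1] using h (Pi.single 6 1) (emb1 a) (Pi.single 1 1)
  · simpa [cyclicMinorVec, minor, emb1] using h (Pi.single 0 1) (emb1 a) (Pi.single 1 1)

/-- The skew-symmetric bilinear bracket on `ℝ⁷` determined by
`x, y, z, w ∈ ℝ` and `A, B, C ∈ gl₄(ℝ)` (as in `brABC`) satisfies the Jacobi identity
if and only if `[A,B] = xB + yC`, `[A,C] = zB + wC` and `[B,C] = 0`. -/
theorem jacobi_iff (x y z w : ℝ) (A B C : Matrix (Fin 4) (Fin 4) ℝ) :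
    (∀ u v t : Vn 7,
        brABC x y z w A B C (brABC x y z w A B C u v) t
        + brABC x y z w A B C (brABC x y z w A B C v t) u
        + brABC x y z w A B C (brABC x y z w A B C t u) v = 0)
    ↔ (A * B - B * A = x • B + y • C ∧ A * C - C * A = z • B + w • C
        ∧ B * C - C * B = 0) := by
  simp only [← sub_eq_zero (b := x • B + y • C), ← sub_eq_zero (b := z • B + w • C), ← sub_sub]
  constructor
  · intro h
    refine eq_zero_of_sum_mulVec_cyclicMinorVec_eq_zero fun u v t => ?_
    rw [← proj1_jacobiator_brABC]
    exact congrArg proj1 (h u v t)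
  · rintro ⟨hAB, hAC, hBC⟩ u v t
    have := jacobiator_brABC x y z w A B C u v t
    rw [hAB, hAC, hBC] at this
    simpa [jacobiator] using this
end
end

section
/- For s ≥ 0, let R_s := (1/16)·diag(−25−24s, −5−24s, −25+24s, −5+24s, 10, −10, −15−64s²) be the Ricci operator of the left-invariant metric on G_s making e₁,…,e₇ orthonormal. There exists λ ∈ ℝ such that R_s − λ·id is a derivation of the Lie algebra g_s if and only if s = 5/8; in that case necessarily λ = −5/2, and R_{5/8} + (5/2)·id = (5/8)·diag(0, 2, 3, 5, 5, 3, 0). (Hence (G_s, ⟨·,·⟩) is a Ricci soliton if and only if s = 5/8, and it is then an expanding Ricci soliton.) -/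
open scoped BigOperators

noncomputable section

/-- The Ricci operator of the left-invariant metric on `G_s` making `e₁,…,e₇`
orthonormal. -/
def RicS (s : ℝ) : Vn 7 →ₗ[ℝ] Vn 7 :=
  dOp fun i =>
    (![-25 - 24 * s, -5 - 24 * s, -25 + 24 * s, -5 + 24 * s, 10, -10,
        -15 - 64 * s ^ 2] i) / 16

/-! The Ricci operator is diagonal in `e₁,…,e₇`, and a diagonal map `diag(d)` is a derivation
of `g_s` exactly when `d_k = d_i + d_j` for each structure bracket `[e_i,e_j] ∈ ℝ e_k` and
`d₇ = 0` (the latter from `[e₇,e₅] = e₅/4`). For `Ric_s - λ·id` the three nilpotent brackets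
each give `λ = -5/2`, and `d₇ = 0` gives `λ = -(15 + 64 s²)/16`, hence `s² = 25/64`. -/

def IsDerivation {V : Type*} [AddCommGroup V] [Module ℝ V] (br : V → V → V)
    (D : V →ₗ[ℝ] V) : Prop :=
  ∀ u v, D (br u v) = br (D u) v + br u (D v)

lemma dOp_add_smul_id (d : Fin 7 → ℝ) (c : ℝ) :
    dOp d + c • LinearMap.id = dOp fun i => d i + c := by
  refine LinearMap.ext fun u => funext fun i => ?_
  simp only [dOp, LinearMap.add_apply, LinearMap.coe_mk, AddHom.coe_mk, LinearMap.smul_apply,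
    LinearMap.id_apply, Pi.add_apply, Pi.smul_apply, smul_eq_mul]
  ring

lemma isDerivation_brG_dOp_iff (s : ℝ) (d : Fin 7 → ℝ) :
    IsDerivation (brG s) (dOp d) ↔
      d 5 = d 0 + d 2 ∧ d 4 = d 0 + d 3 ∧ d 4 = d 1 + d 2 ∧ d 6 = 0 := by
  constructor
  · intro hD
    have h02 := congrFun (hD (Pi.single 0 1) (Pi.single 2 1)) 5
    have h03 := congrFun (hD (Pi.single 0 1) (Pi.single 3 1)) 4
    have h12 := congrFun (hD (Pi.single 1 1) (Pi.single 2 1)) 4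
    have h64 := congrFun (hD (Pi.single 6 1) (Pi.single 4 1)) 4
    simp [brG, dS, dOp, Pi.single_apply] at h02 h03 h12 h64
    exact ⟨by linarith, by linarith, by linarith, by linarith⟩
  · rintro ⟨h5, h4, h42, h6⟩
    have h1 : d 1 = d 0 + d 3 - d 2 := by linarith
    intro u v
    ext i
    fin_cases i <;> simp [brG, dS, dOp, h5, h4, h1, h6] <;> ring

lemma isDerivation_brG_ricS_sub_smul_iff (s lam : ℝ) :
    IsDerivation (brG s) (RicS s - lam • LinearMap.id) ↔ lam = -5 / 2 ∧ s ^ 2 = (5 / 8) ^ 2 := by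
  rw [RicS, sub_eq_add_neg, ← neg_smul lam (LinearMap.id : Vn 7 →ₗ[ℝ] Vn 7), dOp_add_smul_id,
    isDerivation_brG_dOp_iff]
  simp only [Fin.isValue, Matrix.cons_val]
  constructor
  · rintro ⟨h5, h4, -, h6⟩
    constructor <;> linarith
  · rintro ⟨rfl, hs⟩
    exact ⟨by ring, by ring, by ring, by linarith⟩

/-- For `s ≥ 0`, there is a `λ ∈ ℝ` with `Ric_s - λ·id` a derivation
of `g_s` if and only if `s = 5/8`; in that case necessarily `λ = -5/2`, and
`Ric_{5/8} + (5/2)id = (5/8)diag(0,2,3,5,5,3,0)`.  (Hence `(G_s, ⟨·,·⟩)` is a Ricci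
soliton iff `s = 5/8`, and then an expanding one.) -/
theorem gs_ricci_soliton (s : ℝ) (hs : 0 ≤ s) :
    ((∃ lam : ℝ, ∀ u v : Vn 7,
        (RicS s - lam • (LinearMap.id : Vn 7 →ₗ[ℝ] Vn 7)) (brG s u v)
          = brG s ((RicS s - lam • (LinearMap.id : Vn 7 →ₗ[ℝ] Vn 7)) u) v
            + brG s u ((RicS s - lam • (LinearMap.id : Vn 7 →ₗ[ℝ] Vn 7)) v)) ↔ s = 5 / 8)
    ∧ (∀ lam : ℝ,
        (∀ u v : Vn 7,
          (RicS s - lam • (LinearMap.id : Vn 7 →ₗ[ℝ] Vn 7)) (brG s u v)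
            = brG s ((RicS s - lam • (LinearMap.id : Vn 7 →ₗ[ℝ] Vn 7)) u) v
              + brG s u ((RicS s - lam • (LinearMap.id : Vn 7 →ₗ[ℝ] Vn 7)) v)) → lam = -5 / 2)
    ∧ RicS (5 / 8) + (5 / 2 : ℝ) • (LinearMap.id : Vn 7 →ₗ[ℝ] Vn 7)
        = dOp fun i => (5 / 8) * (![0, 2, 3, 5, 5, 3, 0] i) := by
  have hsq : s ^ 2 = (5 / 8) ^ 2 ↔ s = 5 / 8 := sq_eq_sq₀ hs (by norm_num)
  refine ⟨⟨fun ⟨lam, hD⟩ => ?_, fun h58 => ?_⟩, fun lam hD => ?_, ?_⟩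
  · exact hsq.1 ((isDerivation_brG_ricS_sub_smul_iff s lam).1 hD).2
  · exact ⟨-5 / 2, (isDerivation_brG_ricS_sub_smul_iff s _).2 ⟨rfl, hsq.2 h58⟩⟩
  · exact ((isDerivation_brG_ricS_sub_smul_iff s lam).1 hD).1
  · rw [RicS, dOp_add_smul_id]
    congr 1 with i
    fin_cases i <;> norm_num
end
end

section
/- For all real numbers a and s, the Lie algebras s_a and g_s are not isomorphic: there is no bijective linear map h : ℝ⁷ → ℝ⁷ with h[u,v]_{s_a} = [h(u), h(v)]_{g_s} for all u,v. -/
open scoped BigOperators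

noncomputable section

/-!
For both brackets, `(ad y)³ = 0` exactly when `y` lies in the nilradical `span{e₁,…,e₆}`: on it
`ad y` is nilpotent of order three, while `e₅` is an eigenvector of `ad y` whose eigenvalue is a
nonzero multiple of the `e₇`-coordinate of `y`. Isomorphisms therefore preserve the nilradical, and
with it the property that `ad x` maps the nilradical nontrivially into a line. In `g_s` the vector
`e₂` has this property (`[e₂, v] = -v₃ e₅`). The nilradical of `s_a` is the complex Heisenberg
algebra viewed as a real one: `ad x` maps `e₁, e₂` and `e₃, e₄` to pairs whose `(e₅, e₆)`-minors
are `-(x₃² + x₄²)` and `-(x₁² + x₂²)`, so on the nilradical `ad x` has rank two or vanishes.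
-/

section Invariants

variable {R V W : Type*} [Semiring R] [AddCommMonoid V] [Module R V] [AddCommMonoid W] [Module R W]

def IsAdCubeNilpotent (br : V → V → V) (y : V) : Prop :=
  ∀ v, br y (br y (br y v)) = 0

variable (R) in
def IsRankOneOnAdCubeNilpotent (br : V → V → V) (x : V) : Prop :=
  IsAdCubeNilpotent br x ∧ (∃ y, IsAdCubeNilpotent br y ∧ br x y ≠ 0) ∧
    ∃ w : V, ∀ y, IsAdCubeNilpotent br y → ∃ c : R, c • w = br x y

variable {br : V → V → V} {br' : W → W → W} (e : V ≃ₗ[R] W)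

lemma LinearEquiv.symm_map_bracket (he : ∀ u v, e (br u v) = br' (e u) (e v)) (u v : W) :
    e.symm (br' u v) = br (e.symm u) (e.symm v) :=
  e.injective (by simp [he])

lemma isAdCubeNilpotent_map_iff (he : ∀ u v, e (br u v) = br' (e u) (e v)) (y : V) :
    IsAdCubeNilpotent br' (e y) ↔ IsAdCubeNilpotent br y := by
  simp only [IsAdCubeNilpotent, e.surjective.forall, ← he, map_eq_zero_iff e e.injective]

lemma IsRankOneOnAdCubeNilpotent.map (he : ∀ u v, e (br u v) = br' (e u) (e v)) {x : V}
    (hx : IsRankOneOnAdCubeNilpotent R br x) : IsRankOneOnAdCubeNilpotent R br' (e x) := by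
  obtain ⟨hx, ⟨y, hy, hxy⟩, w, hw⟩ := hx
  refine ⟨(isAdCubeNilpotent_map_iff e he x).2 hx,
    ⟨e y, (isAdCubeNilpotent_map_iff e he y).2 hy, by simpa [← he] using hxy⟩, e w, ?_⟩
  intro y' hy'
  obtain ⟨y, rfl⟩ := e.surjective y'
  obtain ⟨c, hc⟩ := hw y ((isAdCubeNilpotent_map_iff e he y).1 hy')
  exact ⟨c, by rw [← map_smul, hc, he]⟩

end Invariants

lemma brA_single_four (a : ℝ) (y : Vn 7) (c : ℝ) :
    brA a y (Pi.single 4 c) = Pi.single 4 (y 6 / 2 * c) := by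
  funext i
  fin_cases i <;> simp [brA, dA, Pi.single_apply]
  ring

lemma brG_single_four (s : ℝ) (y : Vn 7) (c : ℝ) :
    brG s y (Pi.single 4 c) = Pi.single 4 (y 6 / 4 * c) := by
  funext i
  fin_cases i <;> simp [brG, dS, Pi.single_apply]
  ring

lemma brA_brA_brA_eq_zero (a : ℝ) {y : Vn 7} (hy : y 6 = 0) (v : Vn 7) :
    brA a y (brA a y (brA a y v)) = 0 := by
  funext i
  fin_cases i <;> simp [brA, dA, hy]

lemma brG_brG_brG_eq_zero (s : ℝ) {y : Vn 7} (hy : y 6 = 0) (v : Vn 7) :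
    brG s y (brG s y (brG s y v)) = 0 := by
  funext i
  fin_cases i <;> simp [brG, dS, hy]

lemma isAdCubeNilpotent_brA_iff (a : ℝ) (y : Vn 7) :
    IsAdCubeNilpotent (brA a) y ↔ y 6 = 0 := by
  refine ⟨fun hy => ?_, brA_brA_brA_eq_zero a⟩
  simpa [brA_single_four] using congrFun (hy (Pi.single 4 1)) 4

lemma isAdCubeNilpotent_brG_iff (s : ℝ) (y : Vn 7) :
    IsAdCubeNilpotent (brG s) y ↔ y 6 = 0 := by
  refine ⟨fun hy => ?_, brG_brG_brG_eq_zero s⟩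
  simpa [brG_single_four] using congrFun (hy (Pi.single 4 1)) 4

lemma brG_single_one (s : ℝ) {v : Vn 7} (hv : v 6 = 0) :
    brG s (Pi.single 1 1) v = (-v 2) • Pi.single 4 1 := by
  funext i
  fin_cases i <;> simp [brG, dS, Pi.single_apply, hv]

lemma isRankOneOnAdCubeNilpotent_brG_single_one (s : ℝ) :
    IsRankOneOnAdCubeNilpotent ℝ (brG s) (Pi.single 1 1) := by
  simp only [IsRankOneOnAdCubeNilpotent, isAdCubeNilpotent_brG_iff]
  refine ⟨by simp, ⟨Pi.single 2 1, by simp, ?_⟩, Pi.single 4 1,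
    fun y hy => ⟨-y 2, (brG_single_one s hy).symm⟩⟩
  simp [brG_single_one s (v := Pi.single 2 1) (by simp)]

lemma brA_apply_four (a : ℝ) {u v : Vn 7} (hu : u 6 = 0) (hv : v 6 = 0) :
    brA a u v 4 = u 3 * v 0 - u 0 * v 3 + u 2 * v 1 - u 1 * v 2 := by
  simp [brA, dA, hu, hv, add_sub_assoc]

lemma brA_apply_five (a : ℝ) {u v : Vn 7} (hu : u 6 = 0) (hv : v 6 = 0) :
    brA a u v 5 = u 2 * v 0 - u 0 * v 2 + u 1 * v 3 - u 3 * v 1 := by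
  simp [brA, dA, hu, hv, add_sub_assoc]

lemma not_isRankOneOnAdCubeNilpotent_brA (a : ℝ) (x : Vn 7) :
    ¬ IsRankOneOnAdCubeNilpotent ℝ (brA a) x := by
  simp only [IsRankOneOnAdCubeNilpotent, isAdCubeNilpotent_brA_iff]
  rintro ⟨hx, ⟨y, hy, hxy⟩, w, hw⟩
  have minor : ∀ i j : Fin 7, i ≠ 6 → j ≠ 6 →
      brA a x (Pi.single i 1) 4 * brA a x (Pi.single j 1) 5 =
        brA a x (Pi.single i 1) 5 * brA a x (Pi.single j 1) 4 := by
    intro i j hi hj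
    obtain ⟨c, hc⟩ := hw (Pi.single i 1) (by simp [hi.symm])
    obtain ⟨d, hd⟩ := hw (Pi.single j 1) (by simp [hj.symm])
    rw [← hc, ← hd]
    simp only [Pi.smul_apply, smul_eq_mul]
    ring
  have hx01 : -x 1 * x 1 = -x 0 * -x 0 := by
    simpa [brA_apply_four a hx, brA_apply_five a hx] using minor 2 3 (by decide) (by decide)
  have hx23 : x 3 * -x 3 = x 2 * x 2 := by
    simpa [brA_apply_four a hx, brA_apply_five a hx] using minor 0 1 (by decide) (by decide)
  have hx0 : x 0 = 0 := by nlinarith [sq_nonneg (x 1)]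
  have hx1 : x 1 = 0 := by nlinarith [sq_nonneg (x 0)]
  have hx2 : x 2 = 0 := by nlinarith [sq_nonneg (x 3)]
  have hx3 : x 3 = 0 := by nlinarith [sq_nonneg (x 2)]
  apply hxy
  funext i
  fin_cases i <;> simp [brA, dA, hx, hy, hx0, hx1, hx2, hx3]

/-- For all `a, s ∈ ℝ`, the Lie algebras `s_a` and `g_s` are not
isomorphic: there is no bijective linear map `h : ℝ⁷ → ℝ⁷` with
`h[u,v]_{s_a} = [h(u), h(v)]_{g_s}` for all `u, v`. -/
theorem sa_not_isomorphic_gs (a s : ℝ) :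
    ¬ ∃ h : Vn 7 →ₗ[ℝ] Vn 7,
        Function.Bijective h ∧ ∀ u v : Vn 7, h (brA a u v) = brG s (h u) (h v) := by
  rintro ⟨h, hbij, hbr⟩
  let e := LinearEquiv.ofBijective h hbij
  have he : ∀ u v, e.symm (brG s u v) = brA a (e.symm u) (e.symm v) :=
    e.symm_map_bracket hbr
  exact not_isRankOneOnAdCubeNilpotent_brA a _
    ((isRankOneOnAdCubeNilpotent_brG_single_one s).map e.symm he)
end
end

section
/- The steady Laplacian soliton (G_{√15/8}, φ) is not extremally Ricci pinched: with s = √15/8, τ := (5−√15)/4·e¹² + (5+√15)/4·e³⁴ − (5/2)·e⁵⁶ (so |τ|² = 45/4), and dτ the Chevalley–Eilenberg differential of τ on g_{√15/8}, there exists an alternating 3-form β on ℝ⁷ (for instance β = e²⁴⁵) such that 6·⟨β, dτ⟩·e¹²³⁴⁵⁶⁷ ≠ (45/4)·⟨β, φ⟩·e¹²³⁴⁵⁶⁷ + β ∧ τ ∧ τ. (This condition for all β is equivalent to the ERP equation dτ = (1/6)|τ|²φ + (1/6)∗(τ∧τ), since γ ∧ ω = ⟨γ, ∗ω⟩ e¹²³⁴⁵⁶⁷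 for a 3-form γ and 4-form ω.) -/
open scoped BigOperators

noncomputable section

/-!
Take `β = e²⁴⁵`. Each of `e¹²`, `e³⁴`, `e⁵⁶` shares an index with `β`, so `β ∧ τ ∧ τ = 0`.
Pairing with `β` evaluates a `3`-form on `(e₂, e₄, e₅)`; this gives `-1` for `φ` and `0` for `dτ`,
since `span {e₂, e₄, e₅}` is an abelian subalgebra of `g_s`. Evaluated on `(e₁, …, e₇)` the
identity would then read `0 = -45/4`. Throughout, `e^{i₁} ∧ ⋯ ∧ e^{iₖ}` is identified with
`v ↦ det (v_b^{i_a})`; the wedge of two such determinants is the determinant of the concatenated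
family (`MultilinearMap.domCoprod_alternization`).
-/

section DetForm

variable {R M ι : Type*} [CommRing R] [AddCommGroup M] [Module R M] [Fintype ι] [DecidableEq ι]

def detForm (F : ι → M →ₗ[R] R) : M [⋀^ι]→ₗ[R] R :=
  MultilinearMap.alternatization ((MultilinearMap.mkPiAlgebra R ι R).compLinearMap F)

theorem detForm_apply (F : ι → M →ₗ[R] R) (v : ι → M) :
    detForm F v = (Matrix.of fun i j => F i (v j)).det := by
  rw [← Matrix.det_transpose, Matrix.det_apply]
  simp [detForm, MultilinearMap.alternatization_apply]

theorem detForm_domDomCongr {ι' : Type*} [Fintype ι'] [DecidableEq ι'] (F : ι → M →ₗ[R] R)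
    (e : ι ≃ ι') : (detForm F).domDomCongr e = detForm (F ∘ e.symm) := by
  ext v
  rw [AlternatingMap.domDomCongr_apply, detForm_apply, detForm_apply,
    ← Matrix.det_submatrix_equiv_self e.symm]
  congr 1
  ext i j
  simp

theorem detForm_eq_zero_of_eq {F : ι → M →ₗ[R] R} {i j : ι} (hij : i ≠ j) (hF : F i = F j) :
    detForm F = 0 := by
  ext v
  rw [detForm_apply]
  exact Matrix.det_zero_of_row_eq hij (by ext; simp [hF])

end DetForm

section Wedge

variable {n p q : ℕ}

theorem wedge_add_right (α : AltForm n p) (β γ : AltForm n q) :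
    wedge α (β + γ) = wedge α β + wedge α γ := by
  ext v
  simp [wedge, ← AlternatingMap.domCoprod'_apply, TensorProduct.tmul_add]

theorem wedge_smul_right (c : ℝ) (α : AltForm n p) (β : AltForm n q) :
    wedge α (c • β) = c • wedge α β := by
  ext v
  simp [wedge, ← AlternatingMap.domCoprod'_apply, TensorProduct.tmul_smul]

theorem wedge_zero_left (β : AltForm n q) : wedge (0 : AltForm n p) β = 0 := by
  ext v
  simp [wedge, ← AlternatingMap.domCoprod'_apply]

theorem ef_eq_detForm (i : Fin n) : ef i = detForm ![LinearMap.proj i] := by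
  ext v
  rw [detForm_apply, Matrix.det_fin_one]
  rfl

theorem wedge_detForm (F : Fin p → Vn n →ₗ[ℝ] ℝ) (G : Fin q → Vn n →ₗ[ℝ] ℝ) :
    wedge (detForm F) (detForm G) = detForm (Fin.append F G) := by
  have hsum : (LinearMap.mul' ℝ ℝ).compAlternatingMap ((detForm F).domCoprod (detForm G))
      = detForm (Sum.elim F G) := by
    rw [detForm, detForm, ← MultilinearMap.domCoprod_alternization,
      ← LinearMap.compMultilinearMap_alternatization, detForm]
    congr 1
    ext w
    simp [Fintype.prod_sum_type]
  rw [wedge, hsum, detForm_domDomCongr]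
  congr 1
  funext i
  refine Fin.addCases (fun i => ?_) (fun i => ?_) i <;> simp

theorem wedge_detForm_eq_zero_of_eq {F : Fin p → Vn n →ₗ[ℝ] ℝ} {G : Fin q → Vn n →ₗ[ℝ] ℝ}
    {a : Fin p} {b : Fin q} (h : F a = G b) : wedge (detForm F) (detForm G) = 0 := by
  rw [wedge_detForm]
  refine detForm_eq_zero_of_eq (i := Fin.castAdd q a) (j := Fin.natAdd p b) ?_ (by simpa using h)
  exact Fin.ne_of_val_ne (by simp only [Fin.val_castAdd, Fin.val_natAdd]; omega)

end Wedge

theorem formInner_detForm_proj {n k : ℕ} (idx : Fin k → Fin n) (ρ : AltForm n k) :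
    formInner (detForm fun a => LinearMap.proj (idx a)) ρ = ρ fun a => Pi.single (idx a) 1 := by
  classical
  set e : Fin n → Vn n := fun i => Pi.single i 1
  have hdelta : ∀ (v : Fin k → Fin n) (σ : Equiv.Perm (Fin k)),
      ∏ a, e (v (σ a)) (idx a) = if v = idx ∘ σ.symm then 1 else 0 := by
    intro v σ
    simp only [e, Pi.single_apply, Finset.prod_boole, Finset.mem_univ, true_implies]
    congr 1
    refine propext ⟨fun h => funext fun a => ?_, fun h a => by simp [h]⟩
    simpa using (h (σ.symm a)).symm
  have hperm : ∀ σ : Equiv.Perm (Fin k),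
      ((Equiv.Perm.sign σ : ℤ) : ℝ) * ρ (fun m => e ((idx ∘ σ.symm) m)) = ρ fun a => e (idx a) := by
    intro σ
    have := ρ.map_perm (fun a => e (idx a)) σ.symm
    simp only [Function.comp_def] at this ⊢
    rw [this, Equiv.Perm.sign_symm, Units.smul_def, zsmul_eq_mul, ← mul_assoc, ← Int.cast_mul,
      ← Units.val_mul, Int.units_mul_self, Units.val_one, Int.cast_one, one_mul]
  calc formInner (detForm fun a => LinearMap.proj (idx a)) ρ
      = 1 / (k.factorial : ℝ) * ∑ σ : Equiv.Perm (Fin k), ∑ v : Fin k → Fin n,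
          ((Equiv.Perm.sign σ : ℤ) : ℝ) * ((if v = idx ∘ σ.symm then 1 else 0) *
            ρ fun m => e (v m)) := by
        rw [formInner, Finset.sum_comm]
        refine congrArg _ (Finset.sum_congr rfl fun v _ => ?_)
        simp only [detForm, MultilinearMap.alternatization_apply, Finset.sum_mul]
        refine Finset.sum_congr rfl fun σ _ => ?_
        rw [← hdelta]
        simp [e, Units.smul_def, mul_assoc]
    _ = 1 / (k.factorial : ℝ) * ∑ _σ : Equiv.Perm (Fin k), ρ fun a => e (idx a) := by
        simp only [ite_mul, one_mul, zero_mul, mul_ite, mul_zero, Finset.sum_ite_eq',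
          Finset.mem_univ, if_true, hperm]
    _ = ρ fun a => e (idx a) := by
        rw [Finset.sum_const, Finset.card_univ, Fintype.card_perm, Fintype.card_fin, nsmul_eq_mul]
        field_simp

theorem w2_eq_detForm (i j : Fin 7) : w2 i j = detForm ![LinearMap.proj i, LinearMap.proj j] := by
  rw [w2, ef_eq_detForm, ef_eq_detForm, wedge_detForm]
  congr 1
  funext a
  fin_cases a <;> rfl

theorem w3_eq_detForm (i j k : Fin 7) :
    w3 i j k = detForm fun a => LinearMap.proj (![i, j, k] a) := by
  rw [w3, w2_eq_detForm, ef_eq_detForm, wedge_detForm]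
  congr 1
  funext a
  fin_cases a <;> rfl

theorem vol7_eq_detForm : vol7 = detForm fun a : Fin 7 => LinearMap.proj a := by
  simp only [vol7, w5, w4, w3, w2, ef_eq_detForm, wedge_detForm]
  congr 1
  funext a
  fin_cases a <;> rfl

theorem vol7_apply_basis : vol7 (fun i => Pi.single i 1) = 1 := by
  rw [vol7_eq_detForm, detForm_apply, ← Matrix.det_one (n := Fin 7)]
  congr 1
  ext i j
  simp [Matrix.one_apply, Pi.single_apply]

-- Indices are `0`-based: `w3 1 3 4` is `e²⁴⁵`.
theorem wedge_e245_tauS (s : ℝ) : wedge (w3 1 3 4) (tauS s) = 0 := by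
  have h12 : wedge (w3 1 3 4) (w2 0 1) = 0 := by
    rw [w3_eq_detForm, w2_eq_detForm]; exact wedge_detForm_eq_zero_of_eq (a := 0) (b := 1) rfl
  have h34 : wedge (w3 1 3 4) (w2 2 3) = 0 := by
    rw [w3_eq_detForm, w2_eq_detForm]; exact wedge_detForm_eq_zero_of_eq (a := 1) (b := 1) rfl
  have h56 : wedge (w3 1 3 4) (w2 4 5) = 0 := by
    rw [w3_eq_detForm, w2_eq_detForm]; exact wedge_detForm_eq_zero_of_eq (a := 2) (b := 0) rfl
  -- the coefficient `-(5 / 2)` of `e⁵⁶` in `tauS` elaborates as an integer scalar (`-2`)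
  simp only [tauS, ← Int.cast_smul_eq_zsmul ℝ, wedge_add_right, wedge_smul_right, h12, h34, h56,
    smul_zero, add_zero]

theorem phiG2_apply_e245 : phiG2 (fun a => Pi.single (![1, 3, 4] a) 1) = -1 := by
  simp [phiG2, w3_eq_detForm, detForm_apply, Matrix.det_fin_three, Pi.single_apply]

theorem dAt_eq_zero_of_bracket_eq_zero {k : ℕ} {br : Vn 7 → Vn 7 → Vn 7} (α : AltForm 7 (k + 1))
    {v : Fin (k + 2) → Vn 7} (h : ∀ i j, br (v i) (v j) = 0) : dAt br α v = 0 := by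
  refine Finset.sum_eq_zero fun j _ => Finset.sum_eq_zero fun i _ => ?_
  split_ifs
  · rw [h, α.map_coord_zero 0 (Fin.cons_zero _ _), mul_zero]
  · rfl

theorem brG_e245_eq_zero (s : ℝ) (a b : Fin 3) :
    brG s (Pi.single (![1, 3, 4] a) 1) (Pi.single (![1, 3, 4] b) 1) = 0 := by
  funext i
  fin_cases a <;> fin_cases b <;> fin_cases i <;> simp [brG, dS]

/-- The steady Laplacian soliton `(G_{√15/8}, φ)` is not extremally
Ricci pinched: with `τ = (5-√15)/4 e¹² + (5+√15)/4 e³⁴ - (5/2) e⁵⁶` (so `|τ|² = 45/4`)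
and `ρ = dτ` the Chevalley–Eilenberg differential of `τ` on `g_{√15/8}`, there is an
alternating `3`-form `β` on `ℝ⁷` with
`6⟨β, dτ⟩ e¹²³⁴⁵⁶⁷ ≠ (45/4)⟨β, φ⟩ e¹²³⁴⁵⁶⁷ + β ∧ τ ∧ τ`; equivalently, the ERP equation
`dτ = (1/6)|τ|²φ + (1/6)∗(τ∧τ)` fails. -/
theorem gs_steady_soliton_not_ERP :
    ∀ ρ : AltForm 7 3,
      (∀ v : Fin 3 → Vn 7, ρ v = dAt (brG (Real.sqrt 15 / 8)) (tauS (Real.sqrt 15 / 8)) v) →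
      ∃ β : AltForm 7 3,
        (6 * formInner β ρ) • vol7
          ≠ (45 / 4 * formInner β phiG2) • vol7
            + wedge (wedge β (tauS (Real.sqrt 15 / 8))) (tauS (Real.sqrt 15 / 8)) := by
  intro ρ hρ
  refine ⟨w3 1 3 4, fun h => ?_⟩
  have hdτ : formInner (w3 1 3 4) ρ = 0 := by
    rw [w3_eq_detForm, formInner_detForm_proj, hρ]
    exact dAt_eq_zero_of_bracket_eq_zero _ (brG_e245_eq_zero _)
  have hφ : formInner (w3 1 3 4) phiG2 = -1 := by
    rw [w3_eq_detForm, formInner_detForm_proj, phiG2_apply_e245]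
  have h_basis := congrArg (fun ω : AltForm 7 7 => ω fun i => Pi.single i 1) h
  simp only [AlternatingMap.smul_apply, AlternatingMap.add_apply, smul_eq_mul, hdτ, hφ,
    vol7_apply_basis, wedge_e245_tauS, wedge_zero_left, AlternatingMap.zero_apply] at h_basis
  norm_num at h_basis
end
end
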